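/- Let Y₁,…,Y₅ be d×d integer matrices and define, for i = 1,…,5, Aᵢ = O P (Yᵢ ⊗ Yᵢ) P O† ⊕ |e⟩⟨e| (a block matrix with a 1×1 block equal to 1), A₆ = (|0,0⟩⟨0,0| compressed by O) ⊕ 1, A₇ = (|0,0⟩⟨0,0| compressed by O) ⊕ (−1), where P is the symmetric projector on ℂ^d ⊗ ℂ^d and O an isometry with O†O = P, OO† = I. Then for any word j₁,…,j_m ∈ {1,…,5}, tr(A_{j₁}⋯A_{j_m} A₇) = (⟨0|Y_{j₁}⋯Y_{j_m}|0⟩)² − 1. -/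

import Mathlib

/-! `K ↦ O K Oᴴ` is multiplicative on matrices commuting with the projector `P = Oᴴ O`, and every
`Yᵢ ⊗ Yᵢ` commutes with the swap, hence with `P`. So `A_{j₁} ⋯ A_{j_m} = O (Z ⊗ Z) Oᴴ ⊕ 1` with
`Z = Y_{j₁} ⋯ Y_{j_m}`. As `|0,0⟩` is symmetric, the first block of the product with `A₇` has trace
`tr ((Z ⊗ Z) |0,0⟩⟨0,0|) = Z₀₀²`, and the `1 × 1` block contributes `-1`. -/

open Matrix Kronecker

namespace Matrix

variable {k m n R : Type*}

section Swap

variable [DecidableEq n]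

def swapMatrix (n R : Type*) [DecidableEq n] [Zero R] [One R] : Matrix (n × n) (n × n) R :=
  fun p q => if p.1 = q.2 ∧ p.2 = q.1 then 1 else 0

theorem swapMatrix_eq_toMatrix [Zero R] [One R] :
    swapMatrix n R = (Equiv.prodComm n n).toPEquiv.toMatrix := by
  ext p q
  simp [swapMatrix, PEquiv.toMatrix_apply, Prod.ext_iff, eq_comm, and_comm]

variable [Fintype n]

theorem swapMatrix_mul [NonAssocSemiring R] (M : Matrix (n × n) k R) :
    swapMatrix n R * M = M.submatrix Prod.swap id := by
  rw [swapMatrix_eq_toMatrix, PEquiv.toMatrix_toPEquiv_mul]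
  rfl

theorem mul_swapMatrix [NonAssocSemiring R] (M : Matrix k (n × n) R) :
    M * swapMatrix n R = M.submatrix id Prod.swap := by
  rw [swapMatrix_eq_toMatrix, PEquiv.mul_toMatrix_toPEquiv]
  rfl

theorem swapMatrix_mul_kronecker [CommSemiring R] (A B : Matrix n n R) :
    swapMatrix n R * (A ⊗ₖ B) = (B ⊗ₖ A) * swapMatrix n R := by
  rw [swapMatrix_mul, mul_swapMatrix]
  ext p q
  exact mul_comm _ _

theorem swapMatrix_mul_single_diag [NonAssocSemiring R] (i : n) (c : R) :
    swapMatrix n R * single (i, i) (i, i) c = single (i, i) (i, i) c := by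
  rw [swapMatrix_mul]
  ext p q
  simp [single_apply, Prod.ext_iff, and_comm]

theorem single_diag_mul_swapMatrix [NonAssocSemiring R] (i : n) (c : R) :
    single (i, i) (i, i) c * swapMatrix n R = single (i, i) (i, i) c := by
  rw [mul_swapMatrix]
  ext p q
  simp [single_apply, Prod.ext_iff, and_comm]

end Swap

section Symmetrizer

variable [DecidableEq n] [Fintype n] [Field R]

def symmetrizer (n R : Type*) [DecidableEq n] [Field R] : Matrix (n × n) (n × n) R :=
  (1 / 2 : R) • (1 + swapMatrix n R)

theorem commute_symmetrizer_kronecker_self (A : Matrix n n R) :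
    Commute (symmetrizer n R) (A ⊗ₖ A) :=
  ((Commute.one_left _).add_left (swapMatrix_mul_kronecker A A)).smul_left _

variable [NeZero (2 : R)]

theorem symmetrizer_mul_single_diag (i : n) (c : R) :
    symmetrizer n R * single (i, i) (i, i) c = single (i, i) (i, i) c := by
  rw [symmetrizer, smul_mul, add_mul, one_mul, swapMatrix_mul_single_diag, ← two_smul R,
    smul_smul, one_div_mul_cancel two_ne_zero, one_smul]

theorem single_diag_mul_symmetrizer (i : n) (c : R) :
    single (i, i) (i, i) c * symmetrizer n R = single (i, i) (i, i) c := by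
  rw [symmetrizer, Matrix.mul_smul, mul_add, mul_one, single_diag_mul_swapMatrix, ← two_smul R,
    smul_smul, one_div_mul_cancel two_ne_zero, one_smul]

end Symmetrizer

section Isometry

variable [Fintype m] [Fintype n] [DecidableEq m] [Semiring R] [Star R] {O : Matrix m n R}

theorem mul_conjTranspose_mul_self_of_mul_conjTranspose_eq_one (hO : O * Oᴴ = 1) :
    O * (Oᴴ * O) = O := by
  rw [← Matrix.mul_assoc, hO, Matrix.one_mul]

theorem conjTranspose_mul_self_mul_conjTranspose_of_mul_conjTranspose_eq_one (hO : O * Oᴴ = 1) :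
    Oᴴ * O * Oᴴ = Oᴴ := by
  rw [Matrix.mul_assoc, hO, Matrix.mul_one]

theorem conj_mul_conj_of_commute (hO : O * Oᴴ = 1) (J : Matrix n n R) {K : Matrix n n R}
    (hK : Commute (Oᴴ * O) K) : O * J * Oᴴ * (O * K * Oᴴ) = O * (J * K) * Oᴴ :=
  calc O * J * Oᴴ * (O * K * Oᴴ) = O * J * (Oᴴ * O * K) * Oᴴ := by simp only [Matrix.mul_assoc]
    _ = O * J * K * (Oᴴ * O * Oᴴ) := by rw [hK.eq]; simp only [Matrix.mul_assoc]
    _ = O * (J * K) * Oᴴ := by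
      rw [conjTranspose_mul_self_mul_conjTranspose_of_mul_conjTranspose_eq_one hO,
        Matrix.mul_assoc O]

theorem list_prod_map_conj [DecidableEq n] (hO : O * Oᴴ = 1) (L : List (Matrix n n R))
    (hL : ∀ K ∈ L, Commute (Oᴴ * O) K) :
    (L.map fun K => O * K * Oᴴ).prod = O * L.prod * Oᴴ := by
  induction L with
  | nil => simpa using hO.symm
  | cons K L ih =>
    obtain ⟨-, hL⟩ := List.forall_mem_cons.mp hL
    rw [List.map_cons, List.prod_cons, List.prod_cons, ih hL,
      conj_mul_conj_of_commute hO K (Commute.list_prod_right _ _ hL)]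

end Isometry

theorem list_prod_map_kronecker_self [Fintype n] [DecidableEq n] [CommSemiring R]
    (L : List (Matrix n n R)) : (L.map fun A => A ⊗ₖ A).prod = L.prod ⊗ₖ L.prod := by
  induction L with
  | nil => simp
  | cons A L ih => simp only [List.map_cons, List.prod_cons, ih, mul_kronecker_mul]

theorem list_prod_map_fromBlocks_one [Fintype m] [Fintype n] [DecidableEq m] [DecidableEq n]
    [Semiring R] (L : List (Matrix m m R)) :
    (L.map fun M => fromBlocks M 0 0 (1 : Matrix n n R)).prod = fromBlocks L.prod 0 0 1 := by
  induction L with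
  | nil => simp
  | cons M L ih => simp [ih, fromBlocks_multiply]

theorem trace_fromBlocks [Fintype m] [Fintype n] [AddCommMonoid R] (A : Matrix m m R)
    (B : Matrix m n R) (C : Matrix n m R) (D : Matrix n n R) :
    (fromBlocks A B C D).trace = A.trace + D.trace := by
  simp [trace, Fintype.sum_sum_type]

end Matrix

theorem zulc_reduction_trace_with_A7 (d m : ℕ) [NeZero d]
    (Y : Fin 5 → Matrix (Fin d) (Fin d) ℤ)
    (O : Matrix (Fin m) (Fin d × Fin d) ℂ) :
    let F : Matrix (Fin d × Fin d) (Fin d × Fin d) ℂ :=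
      fun p q => if p.1 = q.2 ∧ p.2 = q.1 then 1 else 0
    let P : Matrix (Fin d × Fin d) (Fin d × Fin d) ℂ := (1 / 2 : ℂ) • (1 + F)
    let Yc : Fin 5 → Matrix (Fin d) (Fin d) ℂ := fun i => (Y i).map Int.cast
    let E : Matrix (Fin d × Fin d) (Fin d × Fin d) ℂ :=
      Matrix.single ((0 : Fin d), (0 : Fin d)) ((0 : Fin d), (0 : Fin d)) 1
    let A : Fin 5 → Matrix (Fin m ⊕ Unit) (Fin m ⊕ Unit) ℂ :=
      fun i => Matrix.fromBlocks (O * P * (Yc i ⊗ₖ Yc i) * P * Oᴴ) 0 0 1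
    let A₇ : Matrix (Fin m ⊕ Unit) (Fin m ⊕ Unit) ℂ :=
      Matrix.fromBlocks (O * E * Oᴴ) 0 0 (-1)
    O * Oᴴ = 1 → Oᴴ * O = P →
    ∀ (L : ℕ) (w : Fin L → Fin 5),
      (((List.ofFn fun l => A (w l)).prod) * A₇).trace =
        (((List.ofFn fun l => Yc (w l)).prod) 0 0) ^ 2 - 1 := by
  intro F P Yc E A A₇ hOO hOP L w
  have hP : Oᴴ * O = symmetrizer (Fin d) ℂ := hOP
  have hA : (List.ofFn fun l => A (w l)) = ((((List.ofFn fun l => Yc (w l)).map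
      fun X => X ⊗ₖ X).map fun K => O * K * Oᴴ).map fun M => fromBlocks M 0 0 1) := by
    simp only [List.map_ofFn, Function.comp_def, A, ← hOP, Matrix.mul_assoc,
      mul_conjTranspose_mul_self_of_mul_conjTranspose_eq_one hOO, hOO, Matrix.mul_one]
  have hE : Commute (Oᴴ * O) E := by
    rw [hP, Commute, SemiconjBy, symmetrizer_mul_single_diag, single_diag_mul_symmetrizer]
  rw [hA, list_prod_map_fromBlocks_one, list_prod_map_conj hOO _ (by
      simpa [hP] using fun i => commute_symmetrizer_kronecker_self (Yc (w i))),
    list_prod_map_kronecker_self, fromBlocks_multiply, trace_fromBlocks]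
  simp only [Matrix.mul_zero, add_zero]
  rw [conj_mul_conj_of_commute hOO _ hE, trace_mul_cycle, hP, ← Matrix.mul_assoc,
    (commute_symmetrizer_kronecker_self _).eq, Matrix.mul_assoc, symmetrizer_mul_single_diag,
    trace_mul_single]
  simp [sq, sub_eq_add_neg]
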